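/- arXiv:2409.20347 — 2 statements merged into one kernel-verified Lean document; each statement's English description precedes it below -/
import Mathlib

section
/- Let b, σ, δ, M, Q > 0, P ≥ 0, and define A₋, E₋, F as A₋ = (1/(2M))(b + σ²/2 + δ/2 − √((b + σ²/2 + δ/2)² + 2MP)), E₋ = (Q + (σ²/2)A₋)/(δ + b − 2MA₋), F = M E₋²/δ. Then the function Φ(x) = (A₋/2)x² + E₋ x + F satisfies, for all x ∈ [0,1], −δΦ(x) + M(Φ'(x))² − b x Φ'(x) + (σ²/2) x(1−x) Φ''(x) − (P/2)x² + Q x = 0. -/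
/-! The ansatz turns the HJB equation into a polynomial identity in `x` of degree two, so it
suffices to match coefficients: the `x²`-coefficient vanishes because `A₋` is the smaller root of
`M A² - (b + σ²/2 + δ/2) A - P/2`, the `x`-coefficient by the choice of `E₋`, and the constant
term by that of `F`. The smaller root satisfies `2 M A₋ ≤ 0`, which keeps `δ + b - 2 M A₋`
positive, so the division defining `E₋` is genuine. -/

lemma deriv_quadratic (a e c : ℝ) :
    deriv (fun x : ℝ => a / 2 * x ^ 2 + e * x + c) = fun x => a * x + e := by
  funext x
  have h := (((hasDerivAt_pow 2 x).const_mul (a / 2)).add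
    ((hasDerivAt_id x).const_mul e)).add (hasDerivAt_const x c)
  exact h.deriv.trans (by simp; ring)

lemma deriv_deriv_quadratic (a e c : ℝ) :
    deriv (deriv (fun x : ℝ => a / 2 * x ^ 2 + e * x + c)) = fun _ => a := by
  funext x
  rw [deriv_quadratic]
  exact (((hasDerivAt_id x).const_mul a).add_const e).deriv.trans (mul_one a)

lemma sub_sqrt_sq_add_nonpos (S t : ℝ) (ht : 0 ≤ t) : S - √(S ^ 2 + t) ≤ 0 :=
  sub_nonpos.2 <| (le_abs_self S).trans <| Real.abs_le_sqrt (le_add_of_nonneg_right ht)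

lemma mul_sq_eq_of_two_mul_eq_sub_sqrt {M S P A : ℝ} (hM : M ≠ 0) (hD : 0 ≤ S ^ 2 + 2 * M * P)
    (hA : 2 * M * A = S - √(S ^ 2 + 2 * M * P)) : M * A ^ 2 = S * A + P / 2 := by
  have hsq := Real.sq_sqrt hD
  have h : 4 * M * (M * A ^ 2 - S * A - P / 2) = 0 := by
    linear_combination (2 * M * A - S - √(S ^ 2 + 2 * M * P)) * hA + hsq
  have := (mul_eq_zero.1 h).resolve_left (by positivity)
  linear_combination this

lemma hjb_residual_quadratic_eq_zero {b σ δ M P Q A E F : ℝ}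
    (hA : M * A ^ 2 = (b + σ ^ 2 / 2 + δ / 2) * A + P / 2)
    (hE : E * (δ + b - 2 * M * A) = Q + σ ^ 2 / 2 * A) (hF : δ * F = M * E ^ 2) (x : ℝ) :
    -δ * (A / 2 * x ^ 2 + E * x + F) + M * (A * x + E) ^ 2 - b * x * (A * x + E)
      + σ ^ 2 / 2 * (x * (1 - x)) * A - P / 2 * x ^ 2 + Q * x = 0 := by
  linear_combination x ^ 2 * hA - x * hE - hF

theorem hjb_quadratic_solution_general
    (b σ δ M Q : ℝ) (hb : 0 < b) (hδ : 0 < δ) (hM : 0 < M)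
    (P : ℝ) (hP : 0 ≤ P)
    (Am Em F : ℝ)
    (hAm : Am = (1 / (2 * M)) * (b + σ ^ 2 / 2 + δ / 2
      - Real.sqrt ((b + σ ^ 2 / 2 + δ / 2) ^ 2 + 2 * M * P)))
    (hEm : Em = (Q + σ ^ 2 / 2 * Am) / (δ + b - 2 * M * Am))
    (hF : F = M * Em ^ 2 / δ)
    (Φ : ℝ → ℝ) (hΦ : ∀ x : ℝ, Φ x = Am / 2 * x ^ 2 + Em * x + F) :
    ∀ x ∈ Set.Icc (0:ℝ) 1,
      -δ * Φ x + M * (deriv Φ x) ^ 2 - b * x * deriv Φ x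
        + σ ^ 2 / 2 * (x * (1 - x)) * deriv (deriv Φ) x
        - P / 2 * x ^ 2 + Q * x = 0 := by
  have hD : 0 ≤ (b + σ ^ 2 / 2 + δ / 2) ^ 2 + 2 * M * P := by positivity
  have h2MA : 2 * M * Am = b + σ ^ 2 / 2 + δ / 2
      - √((b + σ ^ 2 / 2 + δ / 2) ^ 2 + 2 * M * P) := by
    rw [hAm]; field_simp
  have hden : 0 < δ + b - 2 * M * Am := by
    linarith [h2MA ▸ sub_sqrt_sq_add_nonpos (b + σ ^ 2 / 2 + δ / 2) (2 * M * P) (by positivity)]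
  have hA := mul_sq_eq_of_two_mul_eq_sub_sqrt hM.ne' hD h2MA
  have hE : Em * (δ + b - 2 * M * Am) = Q + σ ^ 2 / 2 * Am := by
    rw [hEm, div_mul_cancel₀ _ hden.ne']
  have hδF : δ * F = M * Em ^ 2 := by
    rw [hF, mul_div_cancel₀ _ hδ.ne']
  obtain rfl : Φ = fun x => Am / 2 * x ^ 2 + Em * x + F := funext hΦ
  intro x _
  rw [deriv_deriv_quadratic, deriv_quadratic]
  exact hjb_residual_quadratic_eq_zero hA hE hδF x

/-- Verification of the quadratic ansatz: `Φ(x) = (A₋/2)x² + E₋x + F` solves the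
stationary HJB equation (28) of the mean field Jacobi game on [0,1]. -/
theorem hjb_quadratic_solution
    (b σ δ M Q : ℝ) (hb : 0 < b) (hσ : 0 < σ) (hδ : 0 < δ) (hM : 0 < M) (hQ : 0 < Q)
    (P : ℝ) (hP : 0 ≤ P)
    (Am Em F : ℝ)
    (hAm : Am = (1 / (2 * M)) * (b + σ ^ 2 / 2 + δ / 2
      - Real.sqrt ((b + σ ^ 2 / 2 + δ / 2) ^ 2 + 2 * M * P)))
    (hEm : Em = (Q + σ ^ 2 / 2 * Am) / (δ + b - 2 * M * Am))
    (hF : F = M * Em ^ 2 / δ)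
    (Φ : ℝ → ℝ) (hΦ : ∀ x : ℝ, Φ x = Am / 2 * x ^ 2 + Em * x + F) :
    ∀ x ∈ Set.Icc (0:ℝ) 1,
      -δ * Φ x + M * (deriv Φ x) ^ 2 - b * x * deriv Φ x
        + σ ^ 2 / 2 * (x * (1 - x)) * deriv (deriv Φ) x
        - P / 2 * x ^ 2 + Q * x = 0 :=
  hjb_quadratic_solution_general b σ δ M Q hb hδ hM P hP Am Em F hAm hEm hF Φ hΦ
end

section
/- Let b, σ, M > 0, P ≥ 0, Q > 0, define h' = σ²/2 and A_E = (1/(2M))( b + h' − √( (b + h')² + 2MP ) ), E_E = (Q + (σ²/2)A_E)/(b − 2MA_E). Then A_E ≤ 0, b − 2MA_E > 0, and the function Φ(x) = (A_E/2)x² + E_E x together with the constant H = M E_E² satisfies −H + M(Φ'(x))² − b x Φ'(x) + (σ²/2)x(1−x)Φ''(x) − (P/2)x² + Qx = 0 for all x ∈ [0,1]. -/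
/-!
For the ansatz Φ(x) = (A/2)x² + E x, the left side of the HJB equation is a polynomial in x:
its constant term vanishes because H = M E², its x²-coefficient is the Riccati expression
M A² - (b + σ²/2) A - P/2 and its x-coefficient is Q + (σ²/2) A - E (b - 2 M A).
A_E is the smaller root of the Riccati equation, hence A_E ≤ 0, so b - 2 M A_E ≥ b > 0 and
E_E is the solution of the linear equation.
-/

open Real

lemma deriv_half_mul_sq_add_mul (a e : ℝ) :
    deriv (fun x : ℝ => a / 2 * x ^ 2 + e * x) = fun x => a * x + e := by
  funext x
  rw [(((hasDerivAt_pow 2 x).const_mul (a / 2)).fun_add ((hasDerivAt_id' x).const_mul e)).deriv]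
  push_cast
  ring

lemma deriv_mul_add_const (a e : ℝ) : deriv (fun x : ℝ => a * x + e) = fun _ => a := by
  funext x
  simp

noncomputable def smallerRoot (M c P : ℝ) : ℝ :=
  1 / (2 * M) * (c - √(c ^ 2 + 2 * M * P))

section SmallerRoot

variable {M c P : ℝ}

lemma smallerRoot_nonpos (hM : 0 < M) (hP : 0 ≤ P) : smallerRoot M c P ≤ 0 := by
  have hc : c ≤ √(c ^ 2 + 2 * M * P) :=
    (le_abs_self c).trans (abs_le_sqrt (by nlinarith))
  exact mul_nonpos_of_nonneg_of_nonpos (by positivity) (sub_nonpos.mpr hc)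

lemma smallerRoot_isRoot (hM : M ≠ 0) (hD : 0 ≤ c ^ 2 + 2 * M * P) :
    M * smallerRoot M c P ^ 2 - c * smallerRoot M c P - P / 2 = 0 := by
  have hs := sq_sqrt hD
  unfold smallerRoot
  set s := √(c ^ 2 + 2 * M * P)
  field_simp
  linear_combination hs

end SmallerRoot

theorem ergodic_hjb_solution_general
    (b σ M : ℝ) (hb : 0 < b) (hM : 0 < M)
    (P Q : ℝ) (hP : 0 ≤ P)
    (AE EE : ℝ)
    (hAE : AE = (1 / (2 * M)) * (b + σ ^ 2 / 2
      - Real.sqrt ((b + σ ^ 2 / 2) ^ 2 + 2 * M * P)))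
    (hEE : EE = (Q + σ ^ 2 / 2 * AE) / (b - 2 * M * AE))
    (Φ : ℝ → ℝ) (hΦ : ∀ x : ℝ, Φ x = AE / 2 * x ^ 2 + EE * x)
    (H : ℝ) (hH : H = M * EE ^ 2) :
    AE ≤ 0 ∧ b - 2 * M * AE > 0 ∧
    ∀ x ∈ Set.Icc (0:ℝ) 1,
      -H + M * (deriv Φ x) ^ 2 - b * x * deriv Φ x
        + σ ^ 2 / 2 * (x * (1 - x)) * deriv (deriv Φ) x
        - P / 2 * x ^ 2 + Q * x = 0 := by
  have hroot : AE = smallerRoot M (b + σ ^ 2 / 2) P := hAE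
  have hAE_nonpos : AE ≤ 0 := hroot ▸ smallerRoot_nonpos hM hP
  have hden : b - 2 * M * AE > 0 := by nlinarith
  have riccati : M * AE ^ 2 - (b + σ ^ 2 / 2) * AE - P / 2 = 0 :=
    hroot ▸ smallerRoot_isRoot hM.ne' (by positivity)
  have linear : EE * (b - 2 * M * AE) = Q + σ ^ 2 / 2 * AE := by
    rw [hEE, div_mul_cancel₀ _ hden.ne']
  have hΦ' : deriv Φ = fun x => AE * x + EE := by
    rw [funext hΦ, deriv_half_mul_sq_add_mul]
  refine ⟨hAE_nonpos, hden, fun x _ => ?_⟩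
  rw [hΦ', deriv_mul_add_const, hH]
  linear_combination x ^ 2 * riccati - x * linear

/-- Ergodic (δ = 0) HJB verification: the pair `(H, Φ)` with `H = M E_E²` and
`Φ(x) = (A_E/2)x² + E_E x` solves the ergodic HJB equation (71). -/
theorem ergodic_hjb_solution
    (b σ M : ℝ) (hb : 0 < b) (hσ : 0 < σ) (hM : 0 < M)
    (P Q : ℝ) (hP : 0 ≤ P) (hQ : 0 < Q)
    (AE EE : ℝ)
    (hAE : AE = (1 / (2 * M)) * (b + σ ^ 2 / 2
      - Real.sqrt ((b + σ ^ 2 / 2) ^ 2 + 2 * M * P)))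
    (hEE : EE = (Q + σ ^ 2 / 2 * AE) / (b - 2 * M * AE))
    (Φ : ℝ → ℝ) (hΦ : ∀ x : ℝ, Φ x = AE / 2 * x ^ 2 + EE * x)
    (H : ℝ) (hH : H = M * EE ^ 2) :
    AE ≤ 0 ∧ b - 2 * M * AE > 0 ∧
    ∀ x ∈ Set.Icc (0:ℝ) 1,
      -H + M * (deriv Φ x) ^ 2 - b * x * deriv Φ x
        + σ ^ 2 / 2 * (x * (1 - x)) * deriv (deriv Φ) x
        - P / 2 * x ^ 2 + Q * x = 0 :=
  ergodic_hjb_solution_general b σ M hb hM P Q hP AE EE hAE hEE Φ hΦ H hH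
end
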